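/- arXiv:1605.00939 — 4 statements merged into one kernel-verified Lean document; each statement's English description precedes it below -/
import Mathlib

section
/- Let 0 < m < n be integers, α ∈ [0,1], p ∈ [1,∞). There exists a constant Γ = Γ(m,p,α) ∈ (0,∞) such that for every Radon measure μ on ℝⁿ, every x ∈ ℝⁿ, and every R ∈ (0,∞], one has ∫_{B̄(x,R)∖{x}} Θ^m(μ,x,|x−y|)^{m−1} · β̊_{μ,p}(x,|x−y|)^p / |x−y|^{m+αp} dμ(y) ≤ Γ · ∫₀^{2R} Θ^m(μ,x,r)^m · β̊_{μ,p}(x,r)^p / r^{αp} · dr/r. -/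
open MeasureTheory Metric Set
open scoped ENNReal NNReal

noncomputable section

/-- Euclidean space ℝⁿ. -/
abbrev Euc (n : ℕ) : Type := EuclideanSpace ℝ (Fin n)

/-- `A(n,m)`: the set of `m`-dimensional affine planes in ℝⁿ. -/
def affPlanes (n m : ℕ) : Set (AffineSubspace ℝ (Euc n)) :=
  {L | (L : Set (Euc n)).Nonempty ∧ Module.finrank ℝ L.direction = m}

/-- `β_{μ,p}(x,r,L) = r⁻¹ (r^{-m} ∫_{B̄(x,r)} dist(y,L)^p dμ(y))^{1/p}`. -/
def betaL {n : ℕ} (μ : Measure (Euc n)) (m : ℕ) (p : ℝ) (x : Euc n) (r : ℝ)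
    (L : Set (Euc n)) : ℝ≥0∞ :=
  (ENNReal.ofReal r)⁻¹ *
    ((ENNReal.ofReal r ^ m)⁻¹ *
      ∫⁻ y in closedBall x r, ENNReal.ofReal (infDist y L ^ p) ∂μ) ^ (1 / p)

/-- non-centred `β_{μ,p}(x,r)`: infimum over all `m`-planes. -/
def betaInf {n : ℕ} (μ : Measure (Euc n)) (m : ℕ) (p : ℝ) (x : Euc n) (r : ℝ) : ℝ≥0∞ :=
  ⨅ L ∈ affPlanes n m, betaL μ m p x r (L : Set (Euc n))

/-- centred `β̊_{μ,p}(x,r)`: infimum over all `m`-planes passing through `x`. -/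
def betaInfC {n : ℕ} (μ : Measure (Euc n)) (m : ℕ) (p : ℝ) (x : Euc n) (r : ℝ) : ℝ≥0∞ :=
  ⨅ L ∈ {L ∈ affPlanes n m | x ∈ L}, betaL μ m p x r (L : Set (Euc n))

/-- `ω_m`: the Lebesgue measure of the unit ball in ℝ^m. -/
def ballVol (m : ℕ) : ℝ≥0∞ := volume (closedBall (0 : Euc m) 1)

/-- `Θ^m(μ,x,r) = μ(B̄(x,r)) / (ω_m r^m)`. -/
def theta {n : ℕ} (μ : Measure (Euc n)) (m : ℕ) (x : Euc n) (r : ℝ) : ℝ≥0∞ :=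
  μ (closedBall x r) / (ballVol m * ENNReal.ofReal r ^ m)

/-- `h_min(x₀,…,x_{m+1})`: minimal height of a simplex. -/
def hmin {n m : ℕ} (x : Fin (m + 2) → Euc n) : ℝ :=
  ⨅ j, infDist (x j) (affineSpan ℝ (Set.range x \ {x j}) : Set (Euc n))

/-- `K_{μ,p}^α(x,R)`, with `R ∈ (0,∞]` an extended real. -/
def Kcurv {n : ℕ} (μ : Measure (Euc n)) (m : ℕ) (p α : ℝ) (x : Euc n) (R : ℝ≥0∞) : ℝ≥0∞ :=
  ∫⁻ z in Set.univ.pi (fun _ : Fin (m + 1) => EMetric.closedBall x R),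
    ENNReal.ofReal
      (hmin (Fin.cons x z) ^ p /
        Metric.diam (Set.range (Fin.cons x z)) ^ ((m * (m + 1) : ℝ) + (1 + α) * p))
    ∂(Measure.pi fun _ : Fin (m + 1) => μ)

/-- The interval `(0, c)` of real numbers, with extended-real right endpoint. -/
def IooE (c : ℝ≥0∞) : Set ℝ := {r : ℝ | 0 < r ∧ ENNReal.ofReal r < c}

/-- `U(x,y) = {(z₁,…,z_m) : |z_j − x| ≤ |y − x|}`. -/
def Uset {n : ℕ} (m : ℕ) (x y : Euc n) : Set (Fin m → Euc n) :=
  {z | ∀ j, dist (z j) x ≤ dist y x}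

/-- `E(x,y)`. -/
def Ecurv {n : ℕ} (μ : Measure (Euc n)) (m : ℕ) (p α : ℝ) (x y : Euc n) : ℝ≥0∞ :=
  ∫⁻ z in Uset m x y,
    ENNReal.ofReal
      (hmin (Fin.cons x (Fin.cons y z)) ^ p /
        Metric.diam (Set.range (Fin.cons x (Fin.cons y z))) ^
          ((m * (m + 1) : ℝ) + (1 + α) * p))
    ∂(Measure.pi fun _ : Fin m => μ)

/-- The half-open cube with centre `c` and side length `l`. -/
def cube {n : ℕ} (c : Fin n → ℝ) (l : ℝ) : Set (Euc n) :=
  {y | ∀ i, y i ∈ Set.Ico (c i - l / 2) (c i + l / 2)}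

/-- `β_{μ,p}(Q,L)` for a cube `Q` with side length `l`. -/
def betaQL {n : ℕ} (μ : Measure (Euc n)) (m : ℕ) (p : ℝ) (Q : Set (Euc n)) (l : ℝ)
    (L : Set (Euc n)) : ℝ≥0∞ :=
  (ENNReal.ofReal l)⁻¹ *
    ((ENNReal.ofReal l ^ m)⁻¹ * ∫⁻ y in Q, ENNReal.ofReal (infDist y L ^ p) ∂μ) ^ (1 / p)

/-- `β_{μ,p}(Q)` for a cube `Q` with side length `l`. -/
def betaQInf {n : ℕ} (μ : Measure (Euc n)) (m : ℕ) (p : ℝ) (Q : Set (Euc n)) (l : ℝ) : ℝ≥0∞ :=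
  ⨅ L ∈ affPlanes n m, betaQL μ m p Q l (L : Set (Euc n))

/-- The centre of the dyadic cube `2^{-k}(a + [0,1)ⁿ)`. -/
def dyadicCenter {n : ℕ} (k : ℤ) (a : Fin n → ℤ) : Fin n → ℝ :=
  fun i => ((a i : ℝ) + 1 / 2) * 2 ^ (-k)

/-- The dyadic cube `2^{-k}(a + [0,1)ⁿ)`. -/
def dyadicCube {n : ℕ} (k : ℤ) (a : Fin n → ℤ) : Set (Euc n) :=
  cube (dyadicCenter k a) (2 ^ (-k))

/-- `S ⊆ ℝⁿ` is an m-dimensional submanifold of class C¹. -/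
def IsC1Submanifold {n : ℕ} (m : ℕ) (S : Set (Euc n)) : Prop :=
  ∀ x ∈ S, ∃ (U : Set (Euc n)) (V : Set (Euc m)) (f : Euc m → Euc n),
    IsOpen U ∧ x ∈ U ∧ IsOpen V ∧ ContDiffOn ℝ 1 f V ∧ InjOn f V ∧
    f '' V = S ∩ U ∧ ∀ y ∈ V, Function.Injective (fderivWithin ℝ f V y)

/-- The support of a measure: points all of whose neighbourhoods have positive measure. -/
def sptMeasure {n : ℕ} (μ : Measure (Euc n)) : Set (Euc n) :=
  {x | ∀ ε : ℝ, 0 < ε → 0 < μ (ball x ε)}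

/-- `κ(x₀,…,x_{m+1}) = H^{m+1}(conv{x₀,…,x_{m+1}}) / diam^{m+1}`. -/
def kappa {n m : ℕ} (x : Fin (m + 2) → Euc n) : ℝ≥0∞ :=
  μH[(m + 1 : ℝ)] (convexHull ℝ (Set.range x)) /
    ENNReal.ofReal (Metric.diam (Set.range x) ^ (m + 1))

/-- `M_p(μ)`. -/
def Mp {n : ℕ} (μ : Measure (Euc n)) (m : ℕ) (p : ℝ) : ℝ≥0∞ :=
  ∫⁻ x : Fin (m + 2) → Euc n,
    kappa x ^ p / ENNReal.ofReal (Metric.diam (Set.range x) ^ p)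
    ∂(Measure.pi fun _ : Fin (m + 2) => μ)


/-! For `0 < d ≤ r ≤ 2d`, passing from radius `d` to radius `r` costs at most a factor `2^m` in
`Θ^m(μ,x,·)` and `2^{m+p}` in `β̊_{μ,p}(x,·)^p`, because `r^{m+p} β̊_{μ,p}(x,r)^p` is an infimum
of integrals over `B̄(x,r)` and hence monotone in `r`. So the integrand at `y`, with
`d = |x - y|`, is dominated by a constant times `∫_d^{2d} Θ^{m-1} β̊^p r^{-m-αp} dr/r`. Tonelli
turns the `y`-integral of this into `∫ Θ^{m-1} β̊^p r^{-m-αp} μ(B̄(x,r)) dr/r` over `r < 2R`, and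
`μ(B̄(x,r)) = ω_m r^m Θ^m(μ,x,r)` supplies the missing factor of `Θ`. -/

open ENNReal

lemma inv_le_two_mul_inv_of_le_two_mul {a b : ℝ≥0∞} (h : b ≤ 2 * a) : a⁻¹ ≤ 2 * b⁻¹ := by
  calc a⁻¹ = 2 * (2 * a)⁻¹ := by
        rw [ENNReal.mul_inv (Or.inl two_ne_zero) (Or.inl ofNat_ne_top), ← mul_assoc,
          ENNReal.mul_inv_cancel two_ne_zero ofNat_ne_top, one_mul]
    _ ≤ 2 * b⁻¹ := by gcongr

lemma ofReal_le_two_mul_ofReal {d r : ℝ} (h : r ≤ 2 * d) :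
    ENNReal.ofReal r ≤ 2 * ENNReal.ofReal d := by
  calc ENNReal.ofReal r ≤ ENNReal.ofReal (2 * d) := ofReal_le_ofReal h
    _ = 2 * ENNReal.ofReal d := by rw [ofReal_mul zero_le_two, ofReal_ofNat]

lemma inv_ofReal_rpow_le_two_rpow_mul {d r s : ℝ} (hs : 0 ≤ s) (h : r ≤ 2 * d) :
    (ENNReal.ofReal d ^ s)⁻¹ ≤ 2 ^ s * (ENNReal.ofReal r ^ s)⁻¹ := by
  rw [← inv_rpow, ← inv_rpow, ← mul_rpow_of_nonneg _ _ hs]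
  exact rpow_le_rpow (inv_le_two_mul_inv_of_le_two_mul (ofReal_le_two_mul_ofReal h)) hs

lemma le_two_mul_setLIntegral_Ioo_mul_inv {a : ℝ≥0∞} {G : ℝ → ℝ≥0∞} {d : ℝ} (hd : 0 < d)
    (h : ∀ r ∈ Ioo d (2 * d), a ≤ G r) :
    a ≤ 2 * ∫⁻ r in Ioo d (2 * d), G r * ENNReal.ofReal (1 / r) := by
  have hmass : ∫⁻ _ in Ioo d (2 * d), a * ENNReal.ofReal (1 / (2 * d)) = a * 2⁻¹ := by
    rw [setLIntegral_const, Real.volume_Ioo, mul_assoc, ← ofReal_mul (by positivity)]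
    congr
    rw [show 1 / (2 * d) * (2 * d - d) = 2⁻¹ by field_simp; ring, ofReal_inv_of_pos two_pos,
      ofReal_ofNat]
  calc a = 2 * (a * 2⁻¹) := by
        rw [mul_comm a, ← mul_assoc, ENNReal.mul_inv_cancel two_ne_zero ofNat_ne_top, one_mul]
    _ ≤ 2 * ∫⁻ r in Ioo d (2 * d), G r * ENNReal.ofReal (1 / r) := by
      rw [← hmass]
      gcongr 2 * ?_
      refine setLIntegral_mono' measurableSet_Ioo fun r hr => ?_
      gcongr
      · exact h r hr
      · exact hd.trans hr.1
      · exact hr.2.le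

lemma ballVol_ne_zero (m : ℕ) : ballVol m ≠ 0 :=
  (measure_closedBall_pos volume (0 : Euc m) one_pos).ne'

lemma ballVol_ne_top (m : ℕ) : ballVol m ≠ ∞ :=
  measure_closedBall_lt_top.ne

section Density

variable {n : ℕ} (μ : Measure (Euc n)) (m : ℕ) (x : Euc n)

lemma measurable_theta : Measurable (theta μ m x) :=
  (Monotone.measurable fun _ _ h => measure_mono (closedBall_subset_closedBall h)).div
    (measurable_const.mul (measurable_ofReal.pow_const m))

lemma theta_le_two_pow_mul_theta {d r : ℝ} (hdr : d ≤ r) (hr : r ≤ 2 * d) :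
    theta μ m x d ≤ 2 ^ m * theta μ m x r := by
  have hinv : (ENNReal.ofReal d ^ m)⁻¹ ≤ 2 ^ m * (ENNReal.ofReal r ^ m)⁻¹ := by
    simpa only [rpow_natCast] using inv_ofReal_rpow_le_two_rpow_mul (Nat.cast_nonneg m) hr
  simp only [theta, div_eq_mul_inv,
    ENNReal.mul_inv (Or.inl (ballVol_ne_zero m)) (Or.inl (ballVol_ne_top m))]
  calc μ (closedBall x d) * ((ballVol m)⁻¹ * (ENNReal.ofReal d ^ m)⁻¹)
      ≤ μ (closedBall x r) * ((ballVol m)⁻¹ * (2 ^ m * (ENNReal.ofReal r ^ m)⁻¹)) := by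
        gcongr
    _ = _ := by ring

lemma theta_mul_ballVol_mul {r : ℝ} (hr : 0 < r) :
    theta μ m x r * (ballVol m * ENNReal.ofReal r ^ m) = μ (closedBall x r) :=
  ENNReal.div_mul_cancel
    (mul_ne_zero (ballVol_ne_zero m) (pow_ne_zero _ (ofReal_pos.2 hr).ne'))
    (mul_ne_top (ballVol_ne_top m) (pow_ne_top ofReal_ne_top))

end Density

lemma iInf_rpow_of_pos {ι : Sort*} (f : ι → ℝ≥0∞) {p : ℝ} (hp : 0 < p) :
    (⨅ i, f i) ^ p = ⨅ i, f i ^ p :=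
  (orderIsoRpow p hp).map_iInf f

section Beta

variable {n : ℕ} (μ : Measure (Euc n)) (m : ℕ) {p : ℝ} (x : Euc n)

/-- Equals `r^{m+p} β̊_{μ,p}(x,r)^p` for `r > 0`; unlike `β̊` it is monotone in `r`. -/
def centredPlaneMoment (p : ℝ) (r : ℝ) : ℝ≥0∞ :=
  ⨅ L ∈ {L ∈ affPlanes n m | x ∈ L},
    ∫⁻ y in closedBall x r, ENNReal.ofReal (infDist y (L : Set (Euc n)) ^ p) ∂μ

lemma monotone_centredPlaneMoment : Monotone (centredPlaneMoment μ m x p) := fun _ _ h =>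
  iInf₂_mono fun _ _ => lintegral_mono_set (closedBall_subset_closedBall h)

lemma betaL_rpow_eq (hp : 0 < p) {r : ℝ} (hr : 0 < r) (L : Set (Euc n)) :
    betaL μ m p x r L ^ p = (ENNReal.ofReal r ^ ((m : ℝ) + p))⁻¹ *
      ∫⁻ y in closedBall x r, ENNReal.ofReal (infDist y L ^ p) ∂μ := by
  have hr0 : ENNReal.ofReal r ≠ 0 := (ofReal_pos.2 hr).ne'
  rw [betaL, mul_rpow_of_nonneg _ _ hp.le, one_div, rpow_inv_rpow hp.ne', ← mul_assoc,
    inv_rpow, ← rpow_natCast, ← ENNReal.mul_inv (Or.inl (rpow_pos (ofReal_pos.2 hr)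
      ofReal_ne_top).ne') (Or.inl (rpow_ne_top_of_nonneg hp.le ofReal_ne_top)),
    ← rpow_add _ _ hr0 ofReal_ne_top, add_comm]

lemma betaInfC_rpow_eq (hp : 0 < p) {r : ℝ} (hr : 0 < r) :
    betaInfC μ m p x r ^ p =
      (ENNReal.ofReal r ^ ((m : ℝ) + p))⁻¹ * centredPlaneMoment μ m x p r := by
  have hc0 : (ENNReal.ofReal r ^ ((m : ℝ) + p))⁻¹ ≠ 0 :=
    ENNReal.inv_ne_zero.2 (rpow_ne_top_of_nonneg (by positivity) ofReal_ne_top)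
  have hct : (ENNReal.ofReal r ^ ((m : ℝ) + p))⁻¹ ≠ ∞ :=
    ENNReal.inv_ne_top.2 (rpow_pos (ofReal_pos.2 hr) ofReal_ne_top).ne'
  simp only [betaInfC, centredPlaneMoment, iInf_rpow_of_pos _ hp, betaL_rpow_eq μ m x hp hr,
    ENNReal.mul_iInf_of_ne hc0 hct]

lemma aemeasurable_betaInfC_rpow (hp : 0 < p) :
    AEMeasurable (fun r => betaInfC μ m p x r ^ p) (volume.restrict (Ioi 0)) := by
  refine Measurable.aemeasurable (f := fun r => (ENNReal.ofReal r ^ ((m : ℝ) + p))⁻¹ *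
      centredPlaneMoment μ m x p r) ?_ |>.congr ?_
  · exact (measurable_ofReal.pow_const _).inv.mul (monotone_centredPlaneMoment μ m x).measurable
  · exact ae_restrict_of_forall_mem measurableSet_Ioi fun r hr =>
      (betaInfC_rpow_eq μ m x hp hr).symm

lemma betaInfC_rpow_le (hp : 0 < p) {d r : ℝ} (hd : 0 < d) (hdr : d ≤ r) (hr : r ≤ 2 * d) :
    betaInfC μ m p x d ^ p ≤ 2 ^ ((m : ℝ) + p) * betaInfC μ m p x r ^ p := by
  rw [betaInfC_rpow_eq μ m x hp hd, betaInfC_rpow_eq μ m x hp (hd.trans_le hdr), ← mul_assoc]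
  exact mul_le_mul' (inv_ofReal_rpow_le_two_rpow_mul (by positivity) hr)
    (monotone_centredPlaneMoment μ m x hdr)

end Beta

lemma measurableSet_IooE (c : ℝ≥0∞) : MeasurableSet (IooE c) :=
  measurableSet_Ioi.inter (measurable_ofReal measurableSet_Iio)

lemma theta_pow_mul_betaInfC_rpow_div_le {n : ℕ} (μ : Measure (Euc n)) (m : ℕ) {p e : ℝ}
    (x : Euc n) (hp : 0 < p) (he : 0 ≤ e) {d r : ℝ} (hd : 0 < d) (hdr : d ≤ r)
    (hr : r ≤ 2 * d) :
    theta μ m x d ^ (m - 1) * betaInfC μ m p x d ^ p / ENNReal.ofReal (d ^ e) ≤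
      (2 ^ m) ^ (m - 1) * 2 ^ ((m : ℝ) + p) * 2 ^ e *
        (theta μ m x r ^ (m - 1) * betaInfC μ m p x r ^ p / ENNReal.ofReal (r ^ e)) := by
  rw [← ofReal_rpow_of_pos hd, ← ofReal_rpow_of_pos (hd.trans_le hdr), div_eq_mul_inv,
    div_eq_mul_inv]
  calc theta μ m x d ^ (m - 1) * betaInfC μ m p x d ^ p * (ENNReal.ofReal d ^ e)⁻¹
      ≤ (2 ^ m * theta μ m x r) ^ (m - 1) * (2 ^ ((m : ℝ) + p) * betaInfC μ m p x r ^ p) *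
          (2 ^ e * (ENNReal.ofReal r ^ e)⁻¹) := by
        gcongr
        · exact theta_le_two_pow_mul_theta μ m x hdr hr
        · exact betaInfC_rpow_le μ m x hp hd hdr hr
        · exact inv_ofReal_rpow_le_two_rpow_mul he hr
    _ = _ := by ring

lemma lintegral_closedBall_setLIntegral_Ioo_dist_le {X : Type*} [PseudoMetricSpace X]
    [MeasurableSpace X] [OpensMeasurableSpace X] (μ : Measure X) [SFinite μ] (x : X)
    (R : ℝ≥0∞) {W : ℝ → ℝ≥0∞} (hW : Measurable W) :
    ∫⁻ y in EMetric.closedBall x R, (∫⁻ r in Ioo (dist x y) (2 * dist x y), W r) ∂μ ≤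
      ∫⁻ r in IooE (2 * R), W r * μ (closedBall x r) := by
  set T : Set (X × ℝ) := {q | dist x q.1 < q.2 ∧ q.2 < 2 * dist x q.1}
  have hdist : Measurable fun q : X × ℝ => dist x q.1 :=
    (continuous_const.dist continuous_fst).measurable
  have hT : MeasurableSet T :=
    (measurableSet_lt hdist measurable_snd).inter
      (measurableSet_lt measurable_snd (hdist.const_mul 2))
  have hslice : ∀ r, MeasurableSet {y | (y, r) ∈ T} := fun r =>
    measurable_prodMk_right hT
  have hslice_le : ∀ r, (μ.restrict (EMetric.closedBall x R)) {y | (y, r) ∈ T} ≤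
      (IooE (2 * R)).indicator (fun r => μ (closedBall x r)) r := by
    intro r
    rw [Measure.restrict_apply (hslice r)]
    by_cases hr : r ∈ IooE (2 * R)
    · rw [indicator_of_mem hr]
      exact measure_mono fun y hy => mem_closedBall'.2 hy.1.1.le
    · rw [indicator_of_notMem hr]
      refine (measure_mono_null (fun y hy => ?_) measure_empty).le
      obtain ⟨⟨h₁, h₂⟩, hyR⟩ := hy
      refine hr ⟨dist_nonneg.trans_lt h₁, ?_⟩
      calc ENNReal.ofReal r < ENNReal.ofReal (2 * dist x y) :=
            (ofReal_lt_ofReal_iff (by linarith [dist_nonneg (x := x) (y := y)])).2 h₂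
        _ ≤ 2 * ENNReal.ofReal (dist y x) := by
            rw [dist_comm]; exact ofReal_le_two_mul_ofReal le_rfl
        _ ≤ 2 * R := by rw [← edist_dist]; gcongr; exact hyR
  calc ∫⁻ y in EMetric.closedBall x R, (∫⁻ r in Ioo (dist x y) (2 * dist x y), W r) ∂μ
      = ∫⁻ y in EMetric.closedBall x R, (∫⁻ r, T.indicator (fun q => W q.2) (y, r)) ∂μ :=
        lintegral_congr fun y => (lintegral_indicator measurableSet_Ioo _).symm
    _ = ∫⁻ r, ∫⁻ y in EMetric.closedBall x R, T.indicator (fun q => W q.2) (y, r) ∂μ :=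
        lintegral_lintegral_swap ((hW.comp measurable_snd).indicator hT).aemeasurable
    _ = ∫⁻ r, W r * (μ.restrict (EMetric.closedBall x R)) {y | (y, r) ∈ T} :=
        lintegral_congr fun r => lintegral_indicator_const (hslice r) (W r)
    _ ≤ ∫⁻ r, (IooE (2 * R)).indicator (fun r => W r * μ (closedBall x r)) r := by
        refine lintegral_mono fun r => ?_
        rw [indicator_mul_right]
        exact mul_le_mul_right (hslice_le r) _
    _ = ∫⁻ r in IooE (2 * R), W r * μ (closedBall x r) :=
        lintegral_indicator (measurableSet_IooE _) _

lemma lintegral_closedBall_setLIntegral_Ioo_dist_le_of_aemeasurable {X : Type*}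
    [PseudoMetricSpace X] [MeasurableSpace X] [OpensMeasurableSpace X] (μ : Measure X)
    [SFinite μ] (x : X) (R : ℝ≥0∞) {W : ℝ → ℝ≥0∞}
    (hW : AEMeasurable W (volume.restrict (Ioi 0))) :
    ∫⁻ y in EMetric.closedBall x R, (∫⁻ r in Ioo (dist x y) (2 * dist x y), W r) ∂μ ≤
      ∫⁻ r in IooE (2 * R), W r * μ (closedBall x r) := by
  have hmk {s : Set ℝ} (hs : s ⊆ Ioi 0) : W =ᵐ[volume.restrict s] hW.mk W :=
    ae_restrict_of_ae_restrict_of_subset hs hW.ae_eq_mk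
  calc ∫⁻ y in EMetric.closedBall x R, (∫⁻ r in Ioo (dist x y) (2 * dist x y), W r) ∂μ
      = ∫⁻ y in EMetric.closedBall x R,
          (∫⁻ r in Ioo (dist x y) (2 * dist x y), hW.mk W r) ∂μ :=
        lintegral_congr fun y => lintegral_congr_ae (hmk fun r hr => dist_nonneg.trans_lt hr.1)
    _ ≤ ∫⁻ r in IooE (2 * R), hW.mk W r * μ (closedBall x r) :=
        lintegral_closedBall_setLIntegral_Ioo_dist_le μ x R hW.measurable_mk
    _ = ∫⁻ r in IooE (2 * R), W r * μ (closedBall x r) :=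
        lintegral_congr_ae ((hmk fun r hr => hr.1).mono fun r hr => by simp only [hr])

lemma theta_pow_mul_betaInfC_rpow_div_mul_measure_closedBall {n : ℕ} (μ : Measure (Euc n))
    {m : ℕ} (hm : 0 < m) (p s : ℝ) (x : Euc n) {r : ℝ} (hr : 0 < r) :
    theta μ m x r ^ (m - 1) * betaInfC μ m p x r ^ p / ENNReal.ofReal (r ^ ((m : ℝ) + s)) *
        ENNReal.ofReal (1 / r) * μ (closedBall x r) =
      ballVol m * (theta μ m x r ^ m * betaInfC μ m p x r ^ p / ENNReal.ofReal (r ^ s) *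
        ENNReal.ofReal (1 / r)) := by
  have hD0 : ENNReal.ofReal r ^ m ≠ 0 := pow_ne_zero _ (ofReal_pos.2 hr).ne'
  have hDt : ENNReal.ofReal r ^ m ≠ ∞ := pow_ne_top ofReal_ne_top
  rw [← theta_mul_ballVol_mul μ m x hr, Real.rpow_add hr, Real.rpow_natCast,
    ofReal_mul (by positivity), ofReal_pow hr.le, div_eq_mul_inv _ (_ * _),
    ENNReal.mul_inv (Or.inl hD0) (Or.inl hDt)]
  calc theta μ m x r ^ (m - 1) * betaInfC μ m p x r ^ p *
        ((ENNReal.ofReal r ^ m)⁻¹ * (ENNReal.ofReal (r ^ s))⁻¹) * ENNReal.ofReal (1 / r) *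
        (theta μ m x r * (ballVol m * ENNReal.ofReal r ^ m))
      = ballVol m * (theta μ m x r ^ (m - 1) * theta μ m x r * betaInfC μ m p x r ^ p *
          (ENNReal.ofReal (r ^ s))⁻¹ * ENNReal.ofReal (1 / r)) *
          ((ENNReal.ofReal r ^ m)⁻¹ * ENNReal.ofReal r ^ m) := by ring
    _ = _ := by
      rw [ENNReal.inv_mul_cancel hD0 hDt, ← pow_succ, Nat.sub_add_cancel hm, mul_one,
        div_eq_mul_inv _ (ENNReal.ofReal (r ^ s))]

theorem stmt9_general (m : ℕ) (hm : 0 < m) (p α : ℝ) (hp : 1 ≤ p) (hα0 : 0 ≤ α) :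
    ∃ Γ : ℝ≥0∞, 0 < Γ ∧ Γ ≠ ∞ ∧
      ∀ (n : ℕ), m < n → ∀ (μ : Measure (Euc n)) [IsLocallyFiniteMeasure μ],
      ∀ (x : Euc n) (R : ℝ≥0∞), 0 < R →
        (∫⁻ y in EMetric.closedBall x R \ {x},
            theta μ m x (dist x y) ^ (m - 1) * betaInfC μ m p x (dist x y) ^ p /
              ENNReal.ofReal (dist x y ^ ((m : ℝ) + α * p)) ∂μ)
          ≤ Γ * ∫⁻ r in IooE (2 * R),
              theta μ m x r ^ m * betaInfC μ m p x r ^ p / ENNReal.ofReal (r ^ (α * p)) *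
                ENNReal.ofReal (1 / r) := by
  have hp0 : 0 < p := zero_lt_one.trans_le hp
  have he : 0 ≤ (m : ℝ) + α * p := by positivity
  set C : ℝ≥0∞ := (2 ^ m) ^ (m - 1) * 2 ^ ((m : ℝ) + p) * 2 ^ ((m : ℝ) + α * p)
  have hC : C ≠ ∞ := by finiteness
  have hC0 : C ≠ 0 := by simp [C]
  refine ⟨2 * C * ballVol m, ?_, mul_ne_top (mul_ne_top ofNat_ne_top hC) (ballVol_ne_top m),
    fun n _ μ _ x R _ => ?_⟩
  · exact pos_iff_ne_zero.2 (mul_ne_zero (mul_ne_zero two_ne_zero hC0) (ballVol_ne_zero m))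
  set F : ℝ → ℝ≥0∞ := fun d => theta μ m x d ^ (m - 1) * betaInfC μ m p x d ^ p /
    ENNReal.ofReal (d ^ ((m : ℝ) + α * p))
  have hF : ∀ y ∈ EMetric.closedBall x R \ {x}, F (dist x y) ≤
      2 * C * ∫⁻ r in Ioo (dist x y) (2 * dist x y), F r * ENNReal.ofReal (1 / r) := by
    rintro y ⟨-, hy⟩
    have hd : 0 < dist x y := dist_pos.2 (Ne.symm hy)
    calc F (dist x y)
        ≤ 2 * ∫⁻ r in Ioo (dist x y) (2 * dist x y), C * F r * ENNReal.ofReal (1 / r) :=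
          le_two_mul_setLIntegral_Ioo_mul_inv hd fun r hr =>
            theta_pow_mul_betaInfC_rpow_div_le μ m x hp0 he hd hr.1.le hr.2.le
      _ = 2 * C * ∫⁻ r in Ioo (dist x y) (2 * dist x y), F r * ENNReal.ofReal (1 / r) := by
          simp_rw [mul_assoc C, lintegral_const_mul' _ _ hC, mul_assoc]
  have hW : AEMeasurable (fun r => F r * ENNReal.ofReal (1 / r)) (volume.restrict (Ioi 0)) :=
    ((((measurable_theta μ m x).pow_const _).aemeasurable.mul
      (aemeasurable_betaInfC_rpow μ m x hp0)).div (by fun_prop)).mul (by fun_prop)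
  calc ∫⁻ y in EMetric.closedBall x R \ {x}, F (dist x y) ∂μ
      ≤ ∫⁻ y in EMetric.closedBall x R \ {x},
          2 * C * (∫⁻ r in Ioo (dist x y) (2 * dist x y), F r * ENNReal.ofReal (1 / r)) ∂μ :=
        setLIntegral_mono' (EMetric.isClosed_closedBall.measurableSet.diff
          (measurableSet_singleton x)) hF
    _ ≤ 2 * C * ∫⁻ y in EMetric.closedBall x R,
          (∫⁻ r in Ioo (dist x y) (2 * dist x y), F r * ENNReal.ofReal (1 / r)) ∂μ := by
        rw [lintegral_const_mul' _ _ (by finiteness)]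
        exact mul_le_mul_right (lintegral_mono_set diff_subset) _
    _ ≤ 2 * C * ∫⁻ r in IooE (2 * R), F r * ENNReal.ofReal (1 / r) * μ (closedBall x r) :=
        mul_le_mul_right
          (lintegral_closedBall_setLIntegral_Ioo_dist_le_of_aemeasurable μ x R hW) _
    _ = 2 * C * ballVol m * ∫⁻ r in IooE (2 * R),
          theta μ m x r ^ m * betaInfC μ m p x r ^ p / ENNReal.ofReal (r ^ (α * p)) *
            ENNReal.ofReal (1 / r) := by
        rw [mul_assoc (2 * C), ← lintegral_const_mul' _ _ (ballVol_ne_top m)]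
        exact congrArg _ (setLIntegral_congr_fun (measurableSet_IooE _) fun r hr =>
          theta_pow_mul_betaInfC_rpow_div_mul_measure_closedBall μ hm p _ x hr.1)

/-- Estimate (fst-int): with `Γ = Γ(m,p,α)`,
`∫_{B̄(x,R)∖{x}} Θ^{m-1} β̊^p |x−y|^{-m-αp} dμ(y) ≤ Γ ∫₀^{2R} Θ^m β̊^p r^{-αp} dr/r`. -/
theorem stmt9 (m : ℕ) (hm : 0 < m) (p α : ℝ) (hp : 1 ≤ p) (hα0 : 0 ≤ α) (hα1 : α ≤ 1) :
    ∃ Γ : ℝ≥0∞, 0 < Γ ∧ Γ ≠ ∞ ∧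
      ∀ (n : ℕ), m < n → ∀ (μ : Measure (Euc n)) [IsLocallyFiniteMeasure μ],
      ∀ (x : Euc n) (R : ℝ≥0∞), 0 < R →
        (∫⁻ y in EMetric.closedBall x R \ {x},
            theta μ m x (dist x y) ^ (m - 1) * betaInfC μ m p x (dist x y) ^ p /
              ENNReal.ofReal (dist x y ^ ((m : ℝ) + α * p)) ∂μ)
          ≤ Γ * ∫⁻ r in IooE (2 * R),
              theta μ m x r ^ m * betaInfC μ m p x r ^ p / ENNReal.ofReal (r ^ (α * p)) *
                ENNReal.ofReal (1 / r) :=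
  stmt9_general m hm p α hp hα0
end
end

section
/- Let 0 < m < n be integers, α ∈ [0,1], p ∈ [1,∞). There exists a constant Γ = Γ(m,p,α) ∈ (0,∞) with the following property. Let μ be a Radon measure on ℝⁿ, x ∈ ℝⁿ, R ∈ (0,∞), and for each k ∈ ℕ let L_k ∈ A(n,m) be a plane with x ∈ L_k and β_{μ,p}(x,2^{−k}R,L_k) = β̊_{μ,p}(x,2^{−k}R). Define T(y) = L_k for y with 2^{−k−1}R < |y−x| ≤ 2^{−k}R. Then ∫_{B̄(x,R)∖{x}} Θ^m(μ,x,|x−y|)^m · dist(y,T(y))^p / |x−y|^{m+(1+α)p} dμ(y) ≤ Γ · ∫₀^{2R} Θ^m(μ,x,r)^m · β̊_{μ,p}(x,r)^p / r^{αp} · dr/r. -/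
open MeasureTheory Metric Set
open scoped ENNReal NNReal

noncomputable section

/-! Split `B̄(x,R) ∖ {x}` into the annuli `r_k/2 < |y - x| ≤ r_k`, `r_k = 2^{-k}R`. On the `k`-th
annulus `T = L_k`, `Θ(|x - y|) ≤ 2^m Θ(r_k)` and `|x - y| > r_k/2`, so its contribution is at most
a power of `2` times `Θ(r_k)^m r_k^{-m-(1+α)p} ∫_{B̄(x,r_k)} dist(y,L_k)^p dμ`, which by the
optimality of `L_k` is `Θ(r_k)^m β̊(r_k)^p r_k^{-αp}`. Since `Θ`, `β̊` and `r^{-αp}` change by at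
most a bounded factor between `r_k` and any `r ∈ [r_k, 2r_k)`, that term is in turn bounded by a
constant times the integral of `Θ^m β̊^p r^{-αp} dr/r` over `[r_k, 2r_k)`; these intervals are
disjoint and lie in `(0, 2R)`. -/

lemma ENNReal.inv_ofReal_le_two_mul {s t : ℝ} (ht : t ≤ 2 * s) :
    (ENNReal.ofReal s)⁻¹ ≤ 2 * (ENNReal.ofReal t)⁻¹ := by
  have hts : ENNReal.ofReal t ≤ 2 * ENNReal.ofReal s := by
    rw [← ENNReal.ofReal_ofNat, ← ENNReal.ofReal_mul zero_le_two]
    exact ENNReal.ofReal_le_ofReal ht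
  rw [← div_eq_mul_inv, ← ENNReal.inv_div (by simp) (by simp)]
  exact ENNReal.inv_le_inv.mpr (ENNReal.div_le_of_le_mul' hts)

lemma ENNReal.inv_ofReal_pow_le {s t : ℝ} (ht : t ≤ 2 * s) (m : ℕ) :
    (ENNReal.ofReal s ^ m)⁻¹ ≤ 2 ^ m * (ENNReal.ofReal t ^ m)⁻¹ := by
  rw [ENNReal.inv_pow, ENNReal.inv_pow, ← mul_pow]
  exact pow_le_pow_left' (ENNReal.inv_ofReal_le_two_mul ht) m

section Comparison

variable {n : ℕ} (μ : Measure (Euc n)) (m : ℕ) (x : Euc n) {s t : ℝ}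

lemma theta_le_two_pow_mul (hst : s ≤ t) (ht : t ≤ 2 * s) :
    theta μ m x s ≤ 2 ^ m * theta μ m x t := by
  have hω : ballVol m ≠ ∞ := measure_closedBall_lt_top.ne
  have hpow : ∀ r : ℝ, ENNReal.ofReal r ^ m ≠ ∞ := fun r => ENNReal.pow_ne_top ENNReal.ofReal_ne_top
  rw [theta, theta, ENNReal.div_eq_inv_mul, ENNReal.div_eq_inv_mul,
    ENNReal.mul_inv (Or.inr (hpow s)) (Or.inl hω), ENNReal.mul_inv (Or.inr (hpow t)) (Or.inl hω)]
  calc (ballVol m)⁻¹ * (ENNReal.ofReal s ^ m)⁻¹ * μ (closedBall x s)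
      ≤ (ballVol m)⁻¹ * (2 ^ m * (ENNReal.ofReal t ^ m)⁻¹) * μ (closedBall x t) := by
        gcongr
        exact ENNReal.inv_ofReal_pow_le ht m
    _ = 2 ^ m * ((ballVol m)⁻¹ * (ENNReal.ofReal t ^ m)⁻¹ * μ (closedBall x t)) := by ring

lemma betaL_le_mul {p : ℝ} (hp : 0 < p) (hst : s ≤ t) (ht : t ≤ 2 * s)
    (L : Set (Euc n)) :
    betaL μ m p x s L ≤ 2 * (2 ^ m) ^ (1 / p) * betaL μ m p x t L := by
  calc betaL μ m p x s L
      ≤ (2 * (ENNReal.ofReal t)⁻¹) * ((2 ^ m * (ENNReal.ofReal t ^ m)⁻¹) *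
          ∫⁻ y in closedBall x t, ENNReal.ofReal (infDist y L ^ p) ∂μ) ^ (1 / p) := by
        rw [betaL]
        gcongr
        · exact ENNReal.inv_ofReal_le_two_mul ht
        · exact ENNReal.inv_ofReal_pow_le ht m
    _ = 2 * (2 ^ m) ^ (1 / p) * betaL μ m p x t L := by
        rw [betaL, mul_assoc (2 ^ m), ENNReal.mul_rpow_of_nonneg _ _ (by positivity)]
        ring

lemma betaInfC_le_mul {p : ℝ} (hp : 0 < p) (hst : s ≤ t) (ht : t ≤ 2 * s) :
    betaInfC μ m p x s ≤ 2 * (2 ^ m) ^ (1 / p) * betaInfC μ m p x t := by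
  have h0 : (2 : ℝ≥0∞) * (2 ^ m) ^ (1 / p) ≠ 0 := by simp
  have htop : (2 : ℝ≥0∞) * (2 ^ m) ^ (1 / p) ≠ ∞ :=
    ENNReal.mul_ne_top (by simp) (ENNReal.rpow_ne_top_of_nonneg (by positivity) (by simp))
  simp_rw [betaInfC, ENNReal.mul_iInf_of_ne h0 htop]
  exact iInf₂_mono fun L _ => betaL_le_mul μ m x hp hst ht L

end Comparison

lemma ENNReal.ofReal_rpow_div_ofReal_half_rpow {s : ℝ} (hs : 0 < s) (a b : ℝ) :
    ENNReal.ofReal s ^ a / ENNReal.ofReal ((s / 2) ^ (a + b)) =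
      2 ^ (a + b) / ENNReal.ofReal (s ^ b) := by
  have h2 : (2 : ℝ≥0∞) ^ (a + b) = ENNReal.ofReal (2 ^ (a + b)) := by
    rw [← ENNReal.ofReal_rpow_of_pos two_pos, ENNReal.ofReal_ofNat]
  rw [ENNReal.ofReal_rpow_of_pos hs, h2, ← ENNReal.ofReal_div_of_pos (by positivity),
    ← ENNReal.ofReal_div_of_pos (by positivity), Real.div_rpow hs.le zero_le_two,
    Real.rpow_add hs]
  congr 1
  field_simp

section Annulus

variable {n : ℕ} (μ : Measure (Euc n)) (m : ℕ) (x : Euc n)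

lemma setLIntegral_closedBall_infDist_rpow {p : ℝ} (hp : 0 < p) {r : ℝ} (hr : 0 < r)
    (L : Set (Euc n)) :
    ∫⁻ y in closedBall x r, ENNReal.ofReal (infDist y L ^ p) ∂μ =
      ENNReal.ofReal r ^ ((m : ℝ) + p) * betaL μ m p x r L ^ p := by
  have h0 : ENNReal.ofReal r ≠ 0 := by simpa using hr
  have htop : ENNReal.ofReal r ≠ ∞ := ENNReal.ofReal_ne_top
  rw [betaL, ENNReal.mul_rpow_of_nonneg _ _ hp.le, ← ENNReal.rpow_mul, one_div,
    inv_mul_cancel₀ hp.ne', ENNReal.rpow_one, ENNReal.inv_rpow, ENNReal.rpow_add _ _ h0 htop,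
    ENNReal.rpow_natCast]
  calc _ = (ENNReal.ofReal r ^ m * (ENNReal.ofReal r ^ m)⁻¹) *
        (ENNReal.ofReal r ^ p * (ENNReal.ofReal r ^ p)⁻¹) *
          ∫⁻ y in closedBall x r, ENNReal.ofReal (infDist y L ^ p) ∂μ := by
        rw [ENNReal.mul_inv_cancel (pow_ne_zero _ h0) (ENNReal.pow_ne_top htop),
          ENNReal.mul_inv_cancel (ENNReal.rpow_pos_of_nonneg (pos_iff_ne_zero.2 h0) hp.le).ne'
            (ENNReal.rpow_ne_top_of_nonneg hp.le htop), one_mul, one_mul]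
    _ = _ := by ring

lemma setLIntegral_annulus_le {p α : ℝ} (hp : 0 < p) (hα : 0 ≤ α) {s : ℝ} (hs : 0 < s)
    (T : Euc n → Set (Euc n)) (L : Set (Euc n))
    (hT : ∀ y, s / 2 < dist y x → dist y x ≤ s → T y = L) :
    ∫⁻ y in closedBall x s \ closedBall x (s / 2),
        theta μ m x (dist x y) ^ m * ENNReal.ofReal (infDist y (T y) ^ p) /
          ENNReal.ofReal (dist x y ^ ((m : ℝ) + (1 + α) * p)) ∂μ
      ≤ 2 ^ (m * m) * 2 ^ ((m : ℝ) + (1 + α) * p) *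
          (theta μ m x s ^ m * betaL μ m p x s L ^ p / ENNReal.ofReal (s ^ (α * p))) := by
  set E : ℝ := (m : ℝ) + (1 + α) * p with hE
  set C : ℝ≥0∞ := (2 ^ m * theta μ m x s) ^ m / ENNReal.ofReal ((s / 2) ^ E) with hC
  have hpointwise : ∀ y ∈ closedBall x s \ closedBall x (s / 2),
      theta μ m x (dist x y) ^ m * ENNReal.ofReal (infDist y (T y) ^ p) /
          ENNReal.ofReal (dist x y ^ E) ≤ C * ENNReal.ofReal (infDist y L ^ p) := by
    rintro y ⟨hys, hyhalf⟩
    rw [mem_closedBall] at hys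
    rw [mem_closedBall, not_le] at hyhalf
    rw [hT y hyhalf hys, ENNReal.mul_div_right_comm, dist_comm, hC]
    gcongr
    exact theta_le_two_pow_mul μ m x hys (by linarith)
  calc _ ≤ ∫⁻ y in closedBall x s \ closedBall x (s / 2),
          C * ENNReal.ofReal (infDist y L ^ p) ∂μ :=
        setLIntegral_mono' (measurableSet_closedBall.diff measurableSet_closedBall) hpointwise
    _ ≤ ∫⁻ y in closedBall x s, C * ENNReal.ofReal (infDist y L ^ p) ∂μ :=
        lintegral_mono_set sdiff_subset
    _ = C * (ENNReal.ofReal s ^ ((m : ℝ) + p) * betaL μ m p x s L ^ p) := by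
        rw [lintegral_const_mul _
          ((continuous_infDist_pt L).measurable.pow_const p).ennreal_ofReal,
          setLIntegral_closedBall_infDist_rpow μ m x hp hs]
    _ = 2 ^ (m * m) * theta μ m x s ^ m * betaL μ m p x s L ^ p *
          (ENNReal.ofReal s ^ ((m : ℝ) + p) / ENNReal.ofReal ((s / 2) ^ E)) := by
        simp only [C, mul_pow, ← pow_mul, div_eq_mul_inv]
        ring
    _ = _ := by
        rw [hE, show (m : ℝ) + (1 + α) * p = (m + p) + α * p by ring,
          ENNReal.ofReal_rpow_div_ofReal_half_rpow hs]
        simp only [div_eq_mul_inv]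
        ring

end Annulus

section Scales

variable {n : ℕ} (μ : Measure (Euc n)) (m : ℕ) (p α : ℝ) (x : Euc n)

def thetaBetaTerm (r : ℝ) : ℝ≥0∞ :=
  theta μ m x r ^ m * betaInfC μ m p x r ^ p / ENNReal.ofReal (r ^ (α * p))

variable {p α}

lemma thetaBetaTerm_le_mul (hp : 0 < p) (hα : 0 ≤ α) {s t : ℝ} (hs : 0 ≤ s) (hst : s ≤ t)
    (ht : t ≤ 2 * s) :
    thetaBetaTerm μ m p α x s ≤
      2 ^ (m * m) * (2 * (2 ^ m) ^ (1 / p)) ^ p * 2 ^ (α * p) * thetaBetaTerm μ m p α x t := by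
  have hαp : 0 ≤ α * p := by positivity
  unfold thetaBetaTerm
  rw [ENNReal.div_eq_inv_mul, ENNReal.div_eq_inv_mul, ← ENNReal.ofReal_rpow_of_nonneg hs hαp,
    ← ENNReal.ofReal_rpow_of_nonneg (hs.trans hst) hαp, ← ENNReal.inv_rpow, ← ENNReal.inv_rpow]
  calc (ENNReal.ofReal s)⁻¹ ^ (α * p) * (theta μ m x s ^ m * betaInfC μ m p x s ^ p)
      ≤ (2 * (ENNReal.ofReal t)⁻¹) ^ (α * p) *
          ((2 ^ m * theta μ m x t) ^ m * (2 * (2 ^ m) ^ (1 / p) * betaInfC μ m p x t) ^ p) := by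
        gcongr
        · exact ENNReal.inv_ofReal_le_two_mul ht
        · exact theta_le_two_pow_mul μ m x hst ht
        · exact betaInfC_le_mul μ m x hp hst ht
    _ = _ := by
        rw [mul_pow, ← pow_mul, ENNReal.mul_rpow_of_nonneg (2 * (2 ^ m) ^ (1 / p)) _ hp.le,
          ENNReal.mul_rpow_of_nonneg 2 _ hαp]
        ring

lemma thetaBetaTerm_le_mul_setLIntegral (hp : 0 < p) (hα : 0 ≤ α) {s : ℝ} (hs : 0 < s) :
    thetaBetaTerm μ m p α x s ≤
      2 * (2 ^ (m * m) * (2 * (2 ^ m) ^ (1 / p)) ^ p * 2 ^ (α * p)) *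
        ∫⁻ r in Ico s (2 * s), thetaBetaTerm μ m p α x r * ENNReal.ofReal (1 / r) := by
  set K : ℝ≥0∞ := 2 ^ (m * m) * (2 * (2 ^ m) ^ (1 / p)) ^ p * 2 ^ (α * p)
  have hK : K ≠ ∞ := by simp [K, ENNReal.mul_eq_top, ENNReal.rpow_eq_top_iff]
  have hhalf : ENNReal.ofReal (1 / (2 * s)) * ENNReal.ofReal s = 2⁻¹ := by
    rw [← ENNReal.ofReal_mul (by positivity), show 1 / (2 * s) * s = 2⁻¹ by field_simp,
      ENNReal.ofReal_inv_of_pos two_pos, ENNReal.ofReal_ofNat]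
  have hpointwise : ∀ r ∈ Ico s (2 * s),
      thetaBetaTerm μ m p α x s * ENNReal.ofReal (1 / (2 * s)) ≤
        K * (thetaBetaTerm μ m p α x r * ENNReal.ofReal (1 / r)) := by
    rintro r ⟨hsr, hr⟩
    rw [← mul_assoc]
    gcongr
    · exact thetaBetaTerm_le_mul μ m x hp hα hs.le hsr (by linarith)
    · linarith
  calc thetaBetaTerm μ m p α x s
      = 2 * ∫⁻ _ in Ico s (2 * s), thetaBetaTerm μ m p α x s * ENNReal.ofReal (1 / (2 * s)) := by
        rw [setLIntegral_const, Real.volume_Ico, show 2 * s - s = s by ring, mul_assoc, hhalf,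
          mul_comm, mul_assoc, ENNReal.inv_mul_cancel two_ne_zero ENNReal.ofNat_ne_top, mul_one]
    _ ≤ 2 * ∫⁻ r in Ico s (2 * s), K * (thetaBetaTerm μ m p α x r * ENNReal.ofReal (1 / r)) :=
        mul_le_mul_right (setLIntegral_mono' measurableSet_Ico hpointwise) 2
    _ = 2 * K * ∫⁻ r in Ico s (2 * s), thetaBetaTerm μ m p α x r * ENNReal.ofReal (1 / r) := by
        rw [lintegral_const_mul' K _ hK, ← mul_assoc]

end Scales


lemma closedBall_diff_singleton_subset_iUnion_annulus {X : Type*} [MetricSpace X] (x : X)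
    (R : ℝ) :
    closedBall x R \ {x} ⊆
      ⋃ k : ℕ, closedBall x (2 ^ (-(k : ℤ)) * R) \ closedBall x (2 ^ (-(k : ℤ)) * R / 2) := by
  rintro y ⟨hyR, hyx⟩
  have hd : 0 < dist y x := dist_pos.2 hyx
  obtain ⟨k, hk, hk1⟩ := exists_nat_pow_near ((one_le_div hd).2 (mem_closedBall.1 hyR))
    one_lt_two
  simp only [mem_iUnion, mem_sdiff, mem_closedBall, not_le, zpow_neg, zpow_natCast]
  refine ⟨k, ?_, ?_⟩
  · rw [inv_mul_eq_div, le_div_iff₀ (by positivity), mul_comm]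
    exact (le_div_iff₀ hd).1 hk
  · rw [inv_mul_eq_div, div_div, div_lt_iff₀ (by positivity), ← pow_succ, mul_comm]
    exact (div_lt_iff₀ hd).1 hk1

lemma tsum_setLIntegral_Ico_two_mul_le (g : ℝ → ℝ≥0∞) {R : ℝ} (hR : 0 < R) :
    ∑' k : ℕ, ∫⁻ r in Ico (2 ^ (-(k : ℤ)) * R) (2 * (2 ^ (-(k : ℤ)) * R)), g r ≤
      ∫⁻ r in Ioo 0 (2 * R), g r := by
  set f : ℕ → ℝ := fun k => 2 ^ (-(k : ℤ)) * (2 * R)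
  have hf : Antitone f := fun i j hij =>
    mul_le_mul_of_nonneg_right (zpow_le_zpow_right₀ one_le_two (by omega)) (by positivity)
  have hIco : ∀ k : ℕ, Ico (2 ^ (-(k : ℤ)) * R) (2 * (2 ^ (-(k : ℤ)) * R)) =
      Ico (f (Order.succ k)) (f k) := by
    intro k
    have hsucc : (2 : ℝ) ^ (-((k + 1 : ℕ) : ℤ)) * 2 = 2 ^ (-(k : ℤ)) := by
      rw [Nat.cast_succ, neg_add, zpow_add₀ two_ne_zero, zpow_neg_one,
        inv_mul_cancel_right₀ two_ne_zero]
    congr 1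
    · simp only [f, Order.succ_eq_add_one, ← mul_assoc, hsucc]
    · exact mul_left_comm _ _ _
  simp_rw [hIco]
  rw [← lintegral_iUnion (fun _ => measurableSet_Ico) hf.pairwise_disjoint_on_Ico_succ]
  refine lintegral_mono_set (iUnion_subset fun k => ?_)
  refine (Ico_subset_Ioo_left (by positivity)).trans (Ioo_subset_Ioo_right ?_)
  simpa [f] using hf (Nat.zero_le k)


theorem stmt10_general (m : ℕ) (p α : ℝ) (hp : 1 ≤ p) (hα0 : 0 ≤ α) :
    ∃ Γ : ℝ≥0∞, 0 < Γ ∧ Γ ≠ ∞ ∧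
      ∀ (n : ℕ), m < n → ∀ (μ : Measure (Euc n)) [IsLocallyFiniteMeasure μ],
      ∀ (x : Euc n) (R : ℝ), 0 < R →
      ∀ (L : ℕ → AffineSubspace ℝ (Euc n)),
        (∀ k, L k ∈ affPlanes n m) → (∀ k, x ∈ L k) →
        (∀ k : ℕ, betaL μ m p x (2 ^ (-(k : ℤ)) * R) ((L k : Set (Euc n))) =
          betaInfC μ m p x (2 ^ (-(k : ℤ)) * R)) →
      ∀ (T : Euc n → AffineSubspace ℝ (Euc n)),
        (∀ (y : Euc n) (k : ℕ), 2 ^ (-(k : ℤ) - 1) * R < dist y x →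
          dist y x ≤ 2 ^ (-(k : ℤ)) * R → T y = L k) →
        (∫⁻ y in closedBall x R \ {x},
            theta μ m x (dist x y) ^ m *
              ENNReal.ofReal (infDist y ((T y : Set (Euc n))) ^ p) /
                ENNReal.ofReal (dist x y ^ ((m : ℝ) + (1 + α) * p)) ∂μ)
          ≤ Γ * ∫⁻ r in Set.Ioo (0 : ℝ) (2 * R),
              theta μ m x r ^ m * betaInfC μ m p x r ^ p / ENNReal.ofReal (r ^ (α * p)) *
                ENNReal.ofReal (1 / r) := by
  have hp0 : 0 < p := zero_lt_one.trans_le hp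
  set C : ℝ≥0∞ := 2 ^ (m * m) * 2 ^ ((m : ℝ) + (1 + α) * p)
  set K : ℝ≥0∞ := 2 ^ (m * m) * (2 * (2 ^ m) ^ (1 / p)) ^ p * 2 ^ (α * p)
  refine ⟨C * (2 * K), pos_iff_ne_zero.2 (by simp [C, K, hp0.le]),
    by simp [C, K, ENNReal.mul_eq_top, ENNReal.rpow_eq_top_iff], ?_⟩
  intro n _ μ _ x R hR L _ _ hLopt T hT
  set r : ℕ → ℝ := fun k => 2 ^ (-(k : ℤ)) * R
  have hr : ∀ k, 0 < r k := fun k => by positivity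
  have hTk : ∀ k y, r k / 2 < dist y x → dist y x ≤ r k → (T y : Set (Euc n)) = L k := by
    intro k y hy1 hy2
    refine congrArg _ (hT y k ?_ hy2)
    rwa [zpow_sub₀ two_ne_zero, zpow_one, div_mul_eq_mul_div]
  calc _ ≤ ∑' k, ∫⁻ y in closedBall x (r k) \ closedBall x (r k / 2),
          theta μ m x (dist x y) ^ m * ENNReal.ofReal (infDist y (T y : Set (Euc n)) ^ p) /
            ENNReal.ofReal (dist x y ^ ((m : ℝ) + (1 + α) * p)) ∂μ :=
        (lintegral_mono_set (closedBall_diff_singleton_subset_iUnion_annulus x R)).trans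
          (lintegral_iUnion_le _ _)
    _ ≤ ∑' k, C * thetaBetaTerm μ m p α x (r k) := by
        gcongr with k
        rw [thetaBetaTerm, ← hLopt k]
        exact setLIntegral_annulus_le μ m x hp0 hα0 (hr k) _ _ (hTk k)
    _ ≤ ∑' k, C * (2 * K * ∫⁻ t in Ico (r k) (2 * r k),
          thetaBetaTerm μ m p α x t * ENNReal.ofReal (1 / t)) := by
        gcongr with k
        exact thetaBetaTerm_le_mul_setLIntegral μ m x hp0 hα0 (hr k)
    _ = C * (2 * K) * ∑' k, ∫⁻ t in Ico (r k) (2 * r k),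
          thetaBetaTerm μ m p α x t * ENNReal.ofReal (1 / t) := by
        simp_rw [← mul_assoc, ENNReal.tsum_mul_left]
    _ ≤ C * (2 * K) * ∫⁻ t in Ioo 0 (2 * R),
          thetaBetaTerm μ m p α x t * ENNReal.ofReal (1 / t) := by
        gcongr
        exact tsum_setLIntegral_Ico_two_mul_le _ hR

/-- Estimate (snd-int): with `Γ = Γ(m,p,α)`, for optimal centred planes `L_k` at the dyadic
scales `2^{-k}R` and `T(y) = L_k` on the corresponding annuli,
`∫_{B̄(x,R)∖{x}} Θ^m dist(y,T(y))^p |x−y|^{-m-(1+α)p} dμ(y) ≤ Γ ∫₀^{2R} Θ^m β̊^p r^{-αp} dr/r`. -/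
theorem stmt10 (m : ℕ) (hm : 0 < m) (p α : ℝ) (hp : 1 ≤ p) (hα0 : 0 ≤ α) (hα1 : α ≤ 1) :
    ∃ Γ : ℝ≥0∞, 0 < Γ ∧ Γ ≠ ∞ ∧
      ∀ (n : ℕ), m < n → ∀ (μ : Measure (Euc n)) [IsLocallyFiniteMeasure μ],
      ∀ (x : Euc n) (R : ℝ), 0 < R →
      ∀ (L : ℕ → AffineSubspace ℝ (Euc n)),
        (∀ k, L k ∈ affPlanes n m) → (∀ k, x ∈ L k) →
        (∀ k : ℕ, betaL μ m p x (2 ^ (-(k : ℤ)) * R) ((L k : Set (Euc n))) =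
          betaInfC μ m p x (2 ^ (-(k : ℤ)) * R)) →
      ∀ (T : Euc n → AffineSubspace ℝ (Euc n)),
        (∀ (y : Euc n) (k : ℕ), 2 ^ (-(k : ℤ) - 1) * R < dist y x →
          dist y x ≤ 2 ^ (-(k : ℤ)) * R → T y = L k) →
        (∫⁻ y in closedBall x R \ {x},
            theta μ m x (dist x y) ^ m *
              ENNReal.ofReal (infDist y ((T y : Set (Euc n))) ^ p) /
                ENNReal.ofReal (dist x y ^ ((m : ℝ) + (1 + α) * p)) ∂μ)
          ≤ Γ * ∫⁻ r in Set.Ioo (0 : ℝ) (2 * R),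
              theta μ m x r ^ m * betaInfC μ m p x r ^ p / ENNReal.ofReal (r ^ (α * p)) *
                ENNReal.ofReal (1 / r) :=
  stmt10_general m p α hp hα0
end
end

section
/- Let μ be a Radon measure on ℝⁿ and let F ⊆ ℝⁿ be a compact set. For ε > 0 define G_ε = {x ∈ F : μ(Q ∩ F) ≥ ε·μ(Q) for every dyadic cube Q ∈ D with x ∈ Q and l(Q) ≤ ε}. Then μ(F ∖ ⋃_{ε>0} G_ε) = 0. -/
/-! Fix `ε ≤ 1`. Each point of `F \ G_ε` lies in a dyadic cube `Q` with `l(Q) ≤ ε` and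
`μ(Q ∩ F) < ε μ(Q)`; the maximal such cubes are disjoint, cover `F \ G_ε` and lie in the closed
`√n`-neighbourhood `N` of `F`. Summing over them, `μ(F \ G_ε) ≤ ε μ(N)`, and `μ(N) < ∞` because
`N` is compact. Letting `ε → 0` gives the claim. -/

open MeasureTheory Metric Set
open scoped ENNReal NNReal

noncomputable section

open Filter Topology

def dyadicIndex {n : ℕ} (x : Euc n) (k : ℤ) : Fin n → ℤ := fun i => ⌊x i * 2 ^ k⌋

lemma mem_dyadicCube_iff {n : ℕ} {k : ℤ} {a : Fin n → ℤ} {x : Euc n} :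
    x ∈ dyadicCube k a ↔ dyadicIndex x k = a := by
  have h2k : (0 : ℝ) < 2 ^ k := zpow_pos two_pos k
  have hscale : ∀ b : ℝ, b * 2 ^ (-k) = b / 2 ^ k := fun b => by rw [zpow_neg, div_eq_mul_inv]
  simp only [dyadicCube, cube, dyadicCenter, mem_ofPred_eq, mem_Ico, funext_iff, dyadicIndex,
    Int.floor_eq_iff]
  refine forall_congr' fun i => ?_
  rw [show ((a i : ℝ) + 1 / 2) * 2 ^ (-k) - 2 ^ (-k) / 2 = (a i : ℝ) * 2 ^ (-k) by ring,
    show ((a i : ℝ) + 1 / 2) * 2 ^ (-k) + 2 ^ (-k) / 2 = ((a i : ℝ) + 1) * 2 ^ (-k) by ring,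
    hscale, hscale, div_le_iff₀ h2k, lt_div_iff₀ h2k]

lemma mem_dyadicCube_dyadicIndex {n : ℕ} (x : Euc n) (k : ℤ) :
    x ∈ dyadicCube k (dyadicIndex x k) :=
  mem_dyadicCube_iff.2 rfl

lemma dyadicIndex_eq_of_le {n : ℕ} {x y : Euc n} {k k' : ℤ} (hk : k ≤ k')
    (h : dyadicIndex x k' = dyadicIndex y k') : dyadicIndex x k = dyadicIndex y k := by
  obtain ⟨d, rfl⟩ : ∃ d : ℕ, k' = k + d := ⟨(k' - k).toNat, by omega⟩
  have hcoarsen : ∀ t : ℝ, ⌊t * 2 ^ k⌋ = ⌊t * 2 ^ (k + (d : ℤ))⌋ / ((2 ^ d : ℕ) : ℤ) := by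
    intro t
    rw [← Int.floor_div_natCast, zpow_add₀ two_ne_zero, zpow_natCast]
    push_cast
    field_simp
  funext i
  have hi := congrFun h i
  simp only [dyadicIndex] at hi ⊢
  rw [hcoarsen, hcoarsen, hi]

lemma measurableSet_dyadicCube {n : ℕ} (k : ℤ) (a : Fin n → ℤ) :
    MeasurableSet (dyadicCube k a) := by
  have hcoord : ∀ i, Measurable fun y : Euc n => y i := fun i =>
    ((continuous_apply i).comp (PiLp.continuous_ofLp 2 _)).measurable
  have : dyadicCube k a = ⋂ i, (fun y : Euc n => y i) ⁻¹'
      Ico (dyadicCenter k a i - 2 ^ (-k) / 2) (dyadicCenter k a i + 2 ^ (-k) / 2) := by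
    ext y; simp [dyadicCube, cube]
  rw [this]
  exact MeasurableSet.iInter fun i => measurableSet_Ico.preimage (hcoord i)

lemma dist_le_of_mem_dyadicCube {n : ℕ} {k : ℤ} {a : Fin n → ℤ} {z w : Euc n}
    (hz : z ∈ dyadicCube k a) (hw : w ∈ dyadicCube k a) :
    dist z w ≤ Real.sqrt n * 2 ^ (-k) := by
  have hside : ∀ i, dist (z i) (w i) ≤ 2 ^ (-k) := by
    intro i
    have hzi := hz i
    have hwi := hw i
    simp only [mem_Ico] at hzi hwi
    rw [Real.dist_eq, abs_sub_le_iff]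
    constructor <;> linarith
  calc dist z w = Real.sqrt (∑ i, dist (z i) (w i) ^ 2) := EuclideanSpace.dist_eq z w
    _ ≤ Real.sqrt (∑ _i : Fin n, ((2 : ℝ) ^ (-k)) ^ 2) := by
        gcongr with i
        exact hside i
    _ = Real.sqrt n * 2 ^ (-k) := by
        rw [Finset.sum_const, Finset.card_univ, Fintype.card_fin, nsmul_eq_mul,
          Real.sqrt_mul n.cast_nonneg, Real.sqrt_sq (zpow_pos two_pos _).le]

/-- Stopping time: each point of `B` is assigned its `P`-cube of least generation. Two dyadic
cubes are nested or disjoint, and nesting would contradict the minimality of the smaller one. -/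
lemma exists_pairwiseDisjoint_dyadicCube_cover {n : ℕ} (P : ℤ → (Fin n → ℤ) → Prop)
    (B : Set (Euc n)) (hB : ∀ x ∈ B, ∃ m : ℕ, P m (dyadicIndex x m)) :
    ∃ M : Set (ℤ × (Fin n → ℤ)), M.PairwiseDisjoint (fun p => dyadicCube p.1 p.2) ∧
      B ⊆ ⋃ p ∈ M, dyadicCube p.1 p.2 ∧
      ∀ p ∈ M, P p.1 p.2 ∧ (dyadicCube p.1 p.2 ∩ B).Nonempty := by
  classical
  let gen : B → ℕ := fun x => Nat.find (hB x x.2)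
  let cubeOf : B → ℤ × (Fin n → ℤ) := fun x => (gen x, dyadicIndex x (gen x))
  have hnested : ∀ x y : B, gen x ≤ gen y → ∀ z, z ∈ dyadicCube (cubeOf x).1 (cubeOf x).2 →
      z ∈ dyadicCube (cubeOf y).1 (cubeOf y).2 → cubeOf x = cubeOf y := by
    intro x y hxy z hzx hzy
    have hzx' : dyadicIndex z (gen x) = dyadicIndex x (gen x) := mem_dyadicCube_iff.1 hzx
    have hzy' : dyadicIndex z (gen y) = dyadicIndex y (gen y) := mem_dyadicCube_iff.1 hzy
    have hyx : dyadicIndex (y : Euc n) (gen x) = dyadicIndex x (gen x) :=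
      (dyadicIndex_eq_of_le (by exact_mod_cast hxy) hzy').symm.trans hzx'
    have hPy : P (gen x) (dyadicIndex (y : Euc n) (gen x)) := hyx ▸ Nat.find_spec (hB x x.2)
    have hgen : gen x = gen y := le_antisymm hxy (Nat.find_min' _ hPy)
    show ((gen x : ℤ), dyadicIndex (x : Euc n) (gen x)) =
      ((gen y : ℤ), dyadicIndex (y : Euc n) (gen y))
    rw [← hyx, hgen]
  refine ⟨range cubeOf, ?_, ?_, ?_⟩
  · rintro _ ⟨x, rfl⟩ _ ⟨y, rfl⟩ hne
    refine Set.disjoint_left.2 fun z hzx hzy => hne ?_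
    rcases le_total (gen x) (gen y) with h | h
    · exact hnested x y h z hzx hzy
    · exact (hnested y x h z hzy hzx).symm
  · intro x hx
    refine mem_biUnion (x := cubeOf ⟨x, hx⟩) (mem_range_self _) ?_
    exact mem_dyadicCube_dyadicIndex x (gen ⟨x, hx⟩)
  · rintro _ ⟨x, rfl⟩
    exact ⟨Nat.find_spec (hB x x.2), x, mem_dyadicCube_dyadicIndex (x : Euc n) (gen x), x.2⟩

lemma ENNReal.eq_zero_of_forall_le_ofReal_mul {a C : ℝ≥0∞} (hC : C ≠ ⊤)
    (h : ∀ ε : ℝ, 0 < ε → ε ≤ 1 → a ≤ ENNReal.ofReal ε * C) : a = 0 := by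
  have hlim : Tendsto (fun ε : ℝ => ENNReal.ofReal ε * C) (𝓝[>] 0) (𝓝 0) := by
    have hofReal : Tendsto ENNReal.ofReal (𝓝[>] (0 : ℝ)) (𝓝 0) := by
      simpa using (ENNReal.continuous_ofReal.tendsto 0).mono_left nhdsWithin_le_nhds
    simpa using ENNReal.Tendsto.mul_const hofReal (Or.inr hC)
  refine le_antisymm (ge_of_tendsto hlim ?_) zero_le
  filter_upwards [Ioc_mem_nhdsGT_of_mem (left_mem_Ico.2 zero_lt_one)] with ε hε
  exact h ε hε.1 hε.2

def densityGoodSet {n : ℕ} (μ : Measure (Euc n)) (F : Set (Euc n)) (ε : ℝ) : Set (Euc n) :=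
  {x ∈ F | ∀ (k : ℤ) (a : Fin n → ℤ), x ∈ dyadicCube k a → (2 : ℝ) ^ (-k) ≤ ε →
    ENNReal.ofReal ε * μ (dyadicCube k a) ≤ μ (dyadicCube k a ∩ F)}

def IsSparseDyadicCube {n : ℕ} (μ : Measure (Euc n)) (F : Set (Euc n)) (ε : ℝ) (k : ℤ)
    (a : Fin n → ℤ) : Prop :=
  (2 : ℝ) ^ (-k) ≤ ε ∧ μ (dyadicCube k a ∩ F) < ENNReal.ofReal ε * μ (dyadicCube k a)

/-- For `ε ≤ 1` a sparse cube has side at most `1`, so its generation is nonnegative. -/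
lemma exists_isSparseDyadicCube_of_notMem_densityGoodSet {n : ℕ} {μ : Measure (Euc n)}
    {F : Set (Euc n)} {ε : ℝ} (hε : ε ≤ 1) {x : Euc n} (hxF : x ∈ F)
    (hx : x ∉ densityGoodSet μ F ε) :
    ∃ m : ℕ, IsSparseDyadicCube μ F ε m (dyadicIndex x m) := by
  simp only [densityGoodSet, mem_ofPred_eq, not_and, not_forall, not_le] at hx
  obtain ⟨k, a, hxk, hside, hsparse⟩ := hx hxF
  obtain ⟨m, rfl⟩ : ∃ m : ℕ, k = m := by
    refine Int.eq_ofNat_of_zero_le (not_lt.1 fun hk => ?_)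
    have : (1 : ℝ) < 2 ^ (-k) := one_lt_zpow₀ one_lt_two (by omega)
    linarith
  obtain rfl := mem_dyadicCube_iff.1 hxk
  exact ⟨m, hside, hsparse⟩

lemma measure_diff_densityGoodSet_le {n : ℕ} (μ : Measure (Euc n)) (F : Set (Euc n))
    {ε : ℝ} (hε : ε ≤ 1) :
    μ (F \ densityGoodSet μ F ε) ≤ ENNReal.ofReal ε * μ (cthickening (Real.sqrt n) F) := by
  obtain ⟨M, hdisj, hcover, hM⟩ := exists_pairwiseDisjoint_dyadicCube_cover
    (IsSparseDyadicCube μ F ε) (F \ densityGoodSet μ F ε)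
    fun x hx => exists_isSparseDyadicCube_of_notMem_densityGoodSet hε hx.1 hx.2
  have hsub : ⋃ p ∈ M, dyadicCube p.1 p.2 ⊆ cthickening (Real.sqrt n) F := by
    refine iUnion₂_subset fun p hp z hz => ?_
    obtain ⟨⟨hside, -⟩, x, hxQ, hxF, -⟩ := hM p hp
    refine mem_cthickening_of_dist_le z x _ F hxF ((dist_le_of_mem_dyadicCube hz hxQ).trans ?_)
    exact mul_le_of_le_one_right (Real.sqrt_nonneg _) (hside.trans hε)
  have hMc : M.Countable := M.to_countable
  calc μ (F \ densityGoodSet μ F ε) ≤ μ (⋃ p ∈ M, dyadicCube p.1 p.2 ∩ F) :=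
        measure_mono fun x hx => by
          obtain ⟨p, hp, hxp⟩ := mem_iUnion₂.1 (hcover hx)
          exact mem_biUnion hp ⟨hxp, hx.1⟩
    _ ≤ ∑' p : M, μ (dyadicCube p.1.1 p.1.2 ∩ F) := measure_biUnion_le μ hMc _
    _ ≤ ∑' p : M, ENNReal.ofReal ε * μ (dyadicCube p.1.1 p.1.2) :=
        ENNReal.tsum_le_tsum fun p => (hM p p.2).1.2.le
    _ = ENNReal.ofReal ε * μ (⋃ p ∈ M, dyadicCube p.1 p.2) := by
        rw [ENNReal.tsum_mul_left,
          measure_biUnion hMc hdisj fun p _ => measurableSet_dyadicCube p.1 p.2]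
    _ ≤ ENNReal.ofReal ε * μ (cthickening (Real.sqrt n) F) := by gcongr

/-- (Geps-exhaust): for a compact `F`, μ-almost every point of `F` lies in some
`G_ε = {x ∈ F : μ(Q ∩ F) ≥ ε μ(Q)` for all dyadic `Q ∋ x` with `l(Q) ≤ ε}`. -/
theorem stmt13 (n : ℕ) (μ : Measure (Euc n)) [IsLocallyFiniteMeasure μ]
    (F : Set (Euc n)) (hF : IsCompact F) :
    μ (F \ ⋃ (ε : ℝ) (_ : 0 < ε),
        {x ∈ F | ∀ (k : ℤ) (a : Fin n → ℤ), x ∈ dyadicCube k a → (2 : ℝ) ^ (-k) ≤ ε →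
          ENNReal.ofReal ε * μ (dyadicCube k a) ≤ μ (dyadicCube k a ∩ F)}) = 0 := by
  change μ (F \ ⋃ (ε : ℝ) (_ : 0 < ε), densityGoodSet μ F ε) = 0
  have hfinite : μ (cthickening (Real.sqrt n) F) ≠ ⊤ :=
    (hF.cthickening (r := Real.sqrt n)).measure_lt_top.ne
  refine ENNReal.eq_zero_of_forall_le_ofReal_mul hfinite fun ε hε hε1 => ?_
  calc μ (F \ ⋃ (ε : ℝ) (_ : 0 < ε), densityGoodSet μ F ε)
      ≤ μ (F \ densityGoodSet μ F ε) := measure_mono (sdiff_subset_sdiff_right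
        (subset_biUnion_of_mem (u := fun ε : ℝ => densityGoodSet μ F ε) hε))
    _ ≤ _ := measure_diff_densityGoodSet_le μ F hε1
end
end

section
/- Let 0 < m < n be integers, let p ∈ [m(m+1),∞), and set α = 1 − m(m+1)/p. There exists a constant Γ = Γ(m,p) ∈ [1,∞) such that for every Radon measure μ on ℝⁿ, M_p(μ) ≤ Γ · ∫ K_{μ,p}^α(x,∞) dμ(x). -/
open MeasureTheory Metric Set
open scoped ENNReal NNReal

noncomputable section

/-!
Let `x_j` be a vertex realising `h_min`. The remaining vertices span an affine plane `A` of
dimension at most `m`, and if `a₀` is the foot of the perpendicular from `x_j` to `A` and `d` the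
diameter, the simplex lies in the oblique cylinder `a₀ + (A⃗ ∩ B̄(0, d)) + [0, 1] • (x_j - a₀)`.
This cylinder is the image of a box of volume `(2d)^m h_min` under an `(m+1)`-Lipschitz map, so
`H^{m+1}(conv) ≲ d^m h_min`, i.e. `κ ≲ h_min / diam`. For `α = 1 - m(m+1)/p` the exponent in
`K^α_{μ,p}` is exactly `2p`, hence `M_p(μ) ≲ ∫ h_min^p / diam^{2p} dμ^{m+2}`, and splitting off
the first point bounds this by `∫ K^α_{μ,p}(x, ∞) dμ(x)`.
-/

section NormedSpace

variable {E : Type*} [NormedAddCommGroup E] [NormedSpace ℝ E]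

lemma lipschitzWith_add_sum_smul {ι : Type*} [Fintype ι] {e : ι → E}
    (he : ∀ i, ‖e i‖ ≤ 1) (a : E) :
    LipschitzWith (Fintype.card ι) (fun t : ι → ℝ => a + ∑ i, t i • e i) := by
  refine LipschitzWith.of_dist_le_mul fun t t' => ?_
  calc dist (a + ∑ i, t i • e i) (a + ∑ i, t' i • e i)
      = ‖∑ i, (t i - t' i) • e i‖ := by
        simp only [dist_eq_norm, add_sub_add_left_eq_sub, ← Finset.sum_sub_distrib, sub_smul]
    _ ≤ ∑ i, ‖(t i - t' i) • e i‖ := norm_sum_le _ _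
    _ ≤ ∑ _i : ι, dist t t' := Finset.sum_le_sum fun i _ => by
        rw [norm_smul, ← dist_eq_norm]
        exact (mul_le_of_le_one_right dist_nonneg (he i)).trans (dist_le_pi_dist t t' i)
    _ = _ := by simp

lemma hausdorffMeasure_image_box_le [MeasurableSpace E] [BorelSpace E]
    {ι : Type*} [Fintype ι] {e : ι → E} (he : ∀ i, ‖e i‖ ≤ 1) (a : E) (l u : ι → ℝ) :
    μH[Fintype.card ι]
        ((fun t : ι → ℝ => a + ∑ i, t i • e i) '' univ.pi fun i => Icc (l i) (u i)) ≤
      (Fintype.card ι : ℝ≥0∞) ^ Fintype.card ι * ∏ i, ENNReal.ofReal (u i - l i) := by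
  calc _ ≤ ((Fintype.card ι : ℝ≥0) : ℝ≥0∞) ^ (Fintype.card ι : ℝ) *
        μH[Fintype.card ι] (univ.pi fun i => Icc (l i) (u i)) :=
      (lipschitzWith_add_sum_smul he a).hausdorffMeasure_image_le (Nat.cast_nonneg _) _
    _ = _ := by
      rw [hausdorffMeasure_pi_real, volume_pi_pi, ENNReal.rpow_natCast]
      simp [Real.volume_Icc]

def obliqueCylinder (a : E) (V : Submodule ℝ E) (R : ℝ) (u : E) : Set E :=
  {y | ∃ w ∈ V, ‖w‖ ≤ R ∧ ∃ t ∈ Icc (0 : ℝ) 1, y = a + w + t • u}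

lemma convex_obliqueCylinder (a : E) (V : Submodule ℝ E) (R : ℝ) (u : E) :
    Convex ℝ (obliqueCylinder a V R u) := by
  rintro _ ⟨w₁, hw₁, hR₁, t₁, ⟨ht₁, ht₁'⟩, rfl⟩ _ ⟨w₂, hw₂, hR₂, t₂, ⟨ht₂, ht₂'⟩, rfl⟩
    α β hα hβ hαβ
  refine ⟨α • w₁ + β • w₂, V.add_mem (V.smul_mem α hw₁) (V.smul_mem β hw₂), ?_,
    α * t₁ + β * t₂, ⟨by positivity, by nlinarith⟩, ?_⟩
  · calc ‖α • w₁ + β • w₂‖ ≤ α * ‖w₁‖ + β * ‖w₂‖ := by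
          simpa [norm_smul, abs_of_nonneg hα, abs_of_nonneg hβ] using
            norm_add_le (α • w₁) (β • w₂)
      _ ≤ α * R + β * R := by gcongr
      _ = R := by rw [← add_mul, hαβ, one_mul]
  · obtain rfl : β = 1 - α := by linarith
    module

lemma hausdorffMeasure_convexHull_of_subsingleton [MeasurableSpace E] [BorelSpace E]
    {s : Set E} (hs : s.Subsingleton) {d : ℝ} (hd : 0 < d) : μH[d] (convexHull ℝ s) = 0 := by
  have := Measure.nullSingletonClass_hausdorff E hd
  obtain rfl | ⟨a, rfl⟩ := hs.eq_empty_or_singleton <;> simp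

end NormedSpace

section InnerProductSpace

variable {E : Type*} [NormedAddCommGroup E] [InnerProductSpace ℝ E]

lemma Submodule.exists_frame_of_finrank_le (V : Submodule ℝ E) [FiniteDimensional ℝ V] {k : ℕ}
    (hk : Module.finrank ℝ V ≤ k) :
    ∃ e : Fin k → E, (∀ i, ‖e i‖ ≤ 1) ∧
      ∀ w ∈ V, ∃ t : Fin k → ℝ, (∀ i, |t i| ≤ ‖w‖) ∧ ∑ i, t i • e i = w := by
  obtain ⟨j, rfl⟩ := Nat.exists_eq_add_of_le hk
  set b := stdOrthonormalBasis ℝ V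
  refine ⟨Fin.append (fun i => (b i : E)) 0, fun i => ?_, fun w hw => ?_⟩
  · refine Fin.addCases (fun i => ?_) (fun i => ?_) i
    · simp [Submodule.norm_coe, b.orthonormal.1 i]
    · simp
  refine ⟨Fin.append (fun i => b.repr ⟨w, hw⟩ i) 0, fun i => ?_, ?_⟩
  · refine Fin.addCases (fun i => ?_) (fun i => ?_) i
    · simpa [← Real.norm_eq_abs] using PiLp.norm_apply_le (b.repr ⟨w, hw⟩) i
    · simp
  · simp only [Fin.sum_univ_add, Fin.append_left, Fin.append_right]
    simpa using congrArg Subtype.val (b.sum_repr ⟨w, hw⟩)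

lemma hausdorffMeasure_obliqueCylinder_le [MeasurableSpace E] [BorelSpace E] (a : E)
    (V : Submodule ℝ E) [FiniteDimensional ℝ V] {k : ℕ} (hk : Module.finrank ℝ V ≤ k) {R : ℝ}
    (hR : 0 ≤ R) (u : E) :
    μH[k + 1] (obliqueCylinder a V R u) ≤
      ENNReal.ofReal (((k : ℝ) + 1) ^ (k + 1) * (2 * R) ^ k * ‖u‖) := by
  obtain ⟨e, he, hspan⟩ := V.exists_frame_of_finrank_le hk
  let f : Fin k ⊕ Unit → E := Sum.elim e fun _ => ‖u‖⁻¹ • u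
  have hf : ∀ i, ‖f i‖ ≤ 1 := by
    rintro (i | _)
    · exact he i
    · rcases eq_or_ne u 0 with rfl | hu
      · simp [f]
      · simp only [f, Sum.elim_inr]
        rw [norm_smul, norm_inv, norm_norm, inv_mul_cancel₀ (norm_ne_zero_iff.2 hu)]
  have hsub : obliqueCylinder a V R u ⊆ (fun t => a + ∑ i, t i • f i) ''
      univ.pi fun i => Icc (Sum.elim (fun _ => -R) (fun _ => 0) i)
        (Sum.elim (fun _ => R) (fun _ => ‖u‖) i) := by
    rintro _ ⟨w, hw, hwR, t, ⟨ht₀, ht₁⟩, rfl⟩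
    obtain ⟨s, hs, rfl⟩ := hspan w hw
    refine ⟨Sum.elim s fun _ => t * ‖u‖, fun i _ => ?_, ?_⟩
    · rcases i with i | _
      · exact abs_le.1 ((hs i).trans hwR)
      · exact ⟨mul_nonneg ht₀ (norm_nonneg u), mul_le_of_le_one_left (norm_nonneg u) ht₁⟩
    · rcases eq_or_ne u 0 with rfl | hu
      · simp [f]
      · simp [f, Fintype.sum_sum_type, smul_smul, hu, add_assoc]
  calc μH[k + 1] (obliqueCylinder a V R u)
      ≤ μH[Fintype.card (Fin k ⊕ Unit)] _ := by
        rw [show ((Fintype.card (Fin k ⊕ Unit) : ℕ) : ℝ) = k + 1 by simp]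
        exact measure_mono hsub
    _ ≤ _ := hausdorffMeasure_image_box_le hf a _ _
    _ = _ := by
      rw [ENNReal.ofReal_mul (by positivity), ENNReal.ofReal_mul (by positivity),
        ENNReal.ofReal_pow (by positivity), ENNReal.ofReal_pow (by positivity)]
      simp [Fintype.prod_sum_type, two_mul, ENNReal.ofReal_add, mul_assoc]

end InnerProductSpace

lemma finrank_direction_affineSpan_range_diff_le {k V P : Type*} [DivisionRing k]
    [AddCommGroup V] [Module k V] [FiniteDimensional k V] [AddTorsor V P] {m : ℕ}
    (x : Fin (m + 2) → P) (j : Fin (m + 2)) :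
    Module.finrank k (affineSpan k (range x \ {x j})).direction ≤ m := by
  rw [direction_affineSpan]
  refine (Submodule.finrank_mono (vectorSpan_mono k ?_)).trans
    (finrank_vectorSpan_range_le k (x ∘ j.succAbove) (by simp))
  rintro _ ⟨⟨i, rfl⟩, hi⟩
  obtain ⟨i', rfl⟩ := Fin.exists_succAbove_eq fun h : i = j => hi (h ▸ rfl)
  exact ⟨i', rfl⟩

lemma hmin_nonneg {n m : ℕ} (x : Fin (m + 2) → Euc n) : 0 ≤ hmin x :=
  Real.iInf_nonneg fun _ => infDist_nonneg

lemma hausdorffMeasure_convexHull_le_hmin {m n : ℕ} (x : Fin (m + 2) → Euc n) :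
    μH[m + 1] (convexHull ℝ (range x)) ≤
      ENNReal.ofReal (((m : ℝ) + 1) ^ (m + 1) * (2 * diam (range x)) ^ m * hmin x) := by
  obtain ⟨j, hj⟩ := exists_eq_ciInf_of_finite
    (f := fun j => infDist (x j) (affineSpan ℝ (range x \ {x j}) : Set (Euc n)))
  set A := affineSpan ℝ (range x \ {x j})
  rcases (range x \ {x j}).eq_empty_or_nonempty with hs | ⟨a, ha⟩
  · rw [hausdorffMeasure_convexHull_of_subsingleton
      (subsingleton_singleton.anti (sdiff_eq_empty.1 hs)) (by positivity)]
    exact zero_le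
  have : Nonempty A := ⟨⟨a, subset_affineSpan ℝ _ ha⟩⟩
  set a₀ : Euc n := (EuclideanGeometry.orthogonalProjection A (x j) : Euc n)
  have hsub : range x ⊆ obliqueCylinder a₀ A.direction (diam (range x)) (x j - a₀) := by
    rintro _ ⟨i, rfl⟩
    by_cases hi : x i = x j
    · exact ⟨0, zero_mem _, by simpa using diam_nonneg, 1, ⟨zero_le_one, le_rfl⟩,
        by simp [hi]⟩
    have hiA : x i ∈ A := subset_affineSpan ℝ _ ⟨mem_range_self i, hi⟩
    refine ⟨x i - a₀, AffineSubspace.vsub_mem_direction hiA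
      (EuclideanGeometry.orthogonalProjection_mem _), ?_, 0, ⟨le_rfl, zero_le_one⟩, by simp⟩
    have hpyth :=
      EuclideanGeometry.dist_sq_eq_dist_orthogonalProjection_sq_add_dist_orthogonalProjection_sq
        (x j) hiA
    calc ‖x i - a₀‖ = dist (x i) a₀ := (dist_eq_norm _ _).symm
      _ ≤ dist (x i) (x j) := (mul_self_le_mul_self_iff dist_nonneg dist_nonneg).2 <| by
          rw [hpyth]; exact le_add_of_nonneg_right (mul_self_nonneg _)
      _ ≤ diam (range x) :=
          dist_le_diam_of_mem (finite_range x).isBounded (mem_range_self i) (mem_range_self j)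
  calc μH[m + 1] (convexHull ℝ (range x))
      ≤ μH[m + 1] (obliqueCylinder a₀ A.direction (diam (range x)) (x j - a₀)) :=
        measure_mono (convexHull_min hsub (convex_obliqueCylinder ..))
    _ ≤ _ := hausdorffMeasure_obliqueCylinder_le _ _
        (finrank_direction_affineSpan_range_diff_le x j) diam_nonneg _
    _ = _ := by
      rw [← dist_eq_norm, EuclideanGeometry.dist_orthogonalProjection_eq_infDist, hj]
      rfl

def kappaConst (m : ℕ) : ℝ := ((m : ℝ) + 1) ^ (m + 1) * 2 ^ m

lemma one_le_kappaConst (m : ℕ) : 1 ≤ kappaConst m :=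
  one_le_mul_of_one_le_of_one_le (one_le_pow₀ (by linarith [m.cast_nonneg (α := ℝ)]))
    (one_le_pow₀ one_le_two)

lemma kappa_le {m n : ℕ} (x : Fin (m + 2) → Euc n) :
    kappa x ≤ ENNReal.ofReal (kappaConst m * hmin x / diam (range x)) := by
  rcases (diam_nonneg (s := range x)).eq_or_lt with hd | hd
  · have hsub : (range x).Subsingleton := fun y hy z hz =>
      dist_le_zero.1 ((dist_le_diam_of_mem (finite_range x).isBounded hy hz).trans hd.ge)
    rw [kappa, hausdorffMeasure_convexHull_of_subsingleton hsub (by positivity), ENNReal.zero_div]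
    exact zero_le
  calc kappa x
      ≤ ENNReal.ofReal (((m : ℝ) + 1) ^ (m + 1) * (2 * diam (range x)) ^ m * hmin x) /
          ENNReal.ofReal (diam (range x) ^ (m + 1)) :=
        ENNReal.div_le_div_right (hausdorffMeasure_convexHull_le_hmin x) _
    _ = _ := by
      rw [← ENNReal.ofReal_div_of_pos (by positivity), kappaConst]
      congr 1
      field_simp
      ring

lemma kappa_rpow_div_le {m n : ℕ} {p : ℝ} (hp : 0 < p) (x : Fin (m + 2) → Euc n) :
    kappa x ^ p / ENNReal.ofReal (diam (range x) ^ p) ≤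
      ENNReal.ofReal (kappaConst m ^ p) *
        ENNReal.ofReal (hmin x ^ p / diam (range x) ^ (2 * p)) := by
  set d := diam (range x)
  have hd0 : 0 ≤ d := diam_nonneg
  have hC := one_le_kappaConst m
  have hh := hmin_nonneg x
  have hκ : kappa x ^ p ≤ ENNReal.ofReal ((kappaConst m * hmin x / d) ^ p) := by
    rw [← ENNReal.ofReal_rpow_of_nonneg (by positivity) hp.le]
    exact ENNReal.rpow_le_rpow (kappa_le x) hp.le
  rcases hd0.eq_or_lt with hd | hd
  · rw [← hd, div_zero, Real.zero_rpow hp.ne', ENNReal.ofReal_zero, nonpos_iff_eq_zero] at hκ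
    rw [hκ, ENNReal.zero_div]
    exact zero_le
  calc kappa x ^ p / ENNReal.ofReal (d ^ p)
      ≤ ENNReal.ofReal ((kappaConst m * hmin x / d) ^ p) / ENNReal.ofReal (d ^ p) :=
        ENNReal.div_le_div_right hκ _
    _ = ENNReal.ofReal ((kappaConst m * hmin x / d) ^ p / d ^ p) :=
        (ENNReal.ofReal_div_of_pos (by positivity)).symm
    _ = ENNReal.ofReal (kappaConst m ^ p * (hmin x ^ p / d ^ (2 * p))) := by
        rw [Real.div_rpow (by positivity) hd0, Real.mul_rpow (by positivity) hh, two_mul,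
          Real.rpow_add hd]
        field_simp
    _ = _ := ENNReal.ofReal_mul (by positivity)

lemma Kcurv_top_eq {n m : ℕ} (μ : Measure (Euc n)) {p : ℝ} (hp : p ≠ 0) (x : Euc n) :
    Kcurv μ m p (1 - m * (m + 1) / p) x ∞ =
      ∫⁻ z, ENNReal.ofReal (hmin (Fin.cons x z) ^ p / diam (range (Fin.cons x z)) ^ (2 * p))
        ∂(Measure.pi fun _ : Fin (m + 1) => μ) := by
  have hexp : (m * (m + 1) : ℝ) + (1 + (1 - m * (m + 1) / p)) * p = 2 * p := by
    field_simp
    ring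
  have huniv : (univ.pi fun _ : Fin (m + 1) => EMetric.closedBall x ∞) = univ :=
    eq_univ_of_forall fun _ _ _ => Metric.mem_closedEBall.2 le_top
  simp only [Kcurv, hexp, huniv, Measure.restrict_univ]

lemma lintegral_pi_le_lintegral_lintegral_cons {X : Type*} [MeasurableSpace X] (μ : Measure X)
    [SigmaFinite μ] {k : ℕ} (f : (Fin (k + 1) → X) → ℝ≥0∞) :
    ∫⁻ x, f x ∂(Measure.pi fun _ => μ) ≤
      ∫⁻ x, ∫⁻ z, f (Fin.cons x z) ∂(Measure.pi fun _ => μ) ∂μ := by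
  rw [← (measurePreserving_piFinSuccAbove (fun _ : Fin (k + 1) => μ) 0).symm.lintegral_comp_emb
    (MeasurableEquiv.measurableEmbedding _)]
  -- only Tonelli's inequality: the integrand is not assumed measurable
  refine (lintegral_prod_le _).trans_eq ?_
  simp [Fin.consEquiv]

/-- Remark (previous), first estimate: for `p ≥ m(m+1)` and `α = 1 − m(m+1)/p`,
`M_p(μ) ≤ Γ ∫ K_{μ,p}^α(x,∞) dμ(x)` with `Γ = Γ(m,p) ∈ [1,∞)`. -/
theorem stmt14 (m : ℕ) (hm : 0 < m) (p : ℝ) (hp : (m * (m + 1) : ℝ) ≤ p) :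
    ∃ Γ : ℝ≥0∞, 1 ≤ Γ ∧ Γ ≠ ∞ ∧
      ∀ (n : ℕ), m < n → ∀ (μ : Measure (Euc n)) [IsLocallyFiniteMeasure μ],
        Mp μ m p ≤ Γ * ∫⁻ x, Kcurv μ m p (1 - m * (m + 1) / p) x ∞ ∂μ := by
  have hm' : (0 : ℝ) < m := Nat.cast_pos.2 hm
  have hp0 : 0 < p := (by positivity : (0 : ℝ) < m * (m + 1)).trans_le hp
  refine ⟨ENNReal.ofReal (kappaConst m ^ p),
    ENNReal.one_le_ofReal.2 (Real.one_le_rpow (one_le_kappaConst m) hp0.le),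
    ENNReal.ofReal_ne_top, fun n _ μ _ => ?_⟩
  calc Mp μ m p
      ≤ ∫⁻ x, ENNReal.ofReal (kappaConst m ^ p) *
          ENNReal.ofReal (hmin x ^ p / diam (range x) ^ (2 * p))
          ∂(Measure.pi fun _ : Fin (m + 2) => μ) :=
        lintegral_mono fun x => kappa_rpow_div_le hp0 x
    _ = ENNReal.ofReal (kappaConst m ^ p) * ∫⁻ x,
          ENNReal.ofReal (hmin x ^ p / diam (range x) ^ (2 * p))
          ∂(Measure.pi fun _ : Fin (m + 2) => μ) :=
        lintegral_const_mul' _ _ ENNReal.ofReal_ne_top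
    _ ≤ _ := by
      simp_rw [Kcurv_top_eq μ hp0.ne']
      gcongr
      exact lintegral_pi_le_lintegral_lintegral_cons μ _
end
end
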